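/- For a Catalan word w with profile (ℓ_0, h_1, ℓ_1, h_2, …, h_r, ℓ_r), the coefficient C(w) = ∏_{i=0}^{2n} [1 + e_i]_q (product over the elevation sequence) equals ( [h_1]_q! ⋯ [h_r]_q! / ([ℓ_0]_q! ⋯ [ℓ_r]_q!) ) · ( [h_1+1]_q! ⋯ [h_r+1]_q! / ([ℓ_0+1]_q! ⋯ [ℓ_r+1]_q!) ), where [m]_q! = [m]_q [m-1]_q ⋯ [1]_q. -/

import Mathlib

open scoped Classical

inductive Letter | x | y
deriving DecidableEq

instance : Fintype Letter := ⟨{Letter.x, Letter.y}, fun a => by cases a <;> simp⟩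

/-- x ↦ 1, y ↦ -1 -/
def bar : Letter → ℤ
  | .x => 1
  | .y => -1

/-- σ swaps the letters x and y. -/
def sigma : Letter → Letter
  | .x => .y
  | .y => .x

/-- the pairing ⟨u,v⟩ : 2 if u = v, -2 otherwise. -/
def pair : Letter → Letter → ℤ := fun u v => if u = v then 2 else -2

noncomputable section

/-- The free associative algebra on the two letters x, y (with its word basis). -/
abbrev V (F : Type*) [Field F] := MonoidAlgebra F (FreeMonoid Letter)

variable {F : Type*} [Field F]

/-- the basis word of V corresponding to a list of letters -/
def wd (w : List Letter) : V F := MonoidAlgebra.single (FreeMonoid.ofList w) 1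

/-- the q-shuffle product of two words, by the left recursion -/
def shuffleWord (q : F) : List Letter → List Letter → V F
  | [], v => wd v
  | u1 :: ut, [] => wd (u1 :: ut)
  | u1 :: ut, v1 :: vt =>
      wd [u1] * shuffleWord q ut (v1 :: vt)
      + q ^ (((u1 :: ut).map (fun a => pair a v1)).sum) •
          (wd [v1] * shuffleWord q (u1 :: ut) vt)
termination_by u v => u.length + v.length

/-- the q-shuffle product on V, extended bilinearly -/
def shuffle (q : F) (a b : V F) : V F :=
  a.coeff.sum fun u cu => b.coeff.sum fun v cv =>
    (cu * cv) • shuffleWord q (FreeMonoid.toList u) (FreeMonoid.toList v)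

/-- the quantum integer [m]_q -/
def qint (q : F) (m : ℤ) : F := (q ^ m - q ^ (-m)) / (q - q⁻¹)

/-- the quantum factorial [m]_q! -/
def qfac (q : F) (m : ℤ) : F := ∏ j ∈ Finset.range m.toNat, qint q ((j : ℤ) + 1)

/-- e_i = ā_1 + ⋯ + ā_i, the i-th elevation of the word w -/
def esum (w : List Letter) (i : ℕ) : ℤ := ((w.take i).map bar).sum

/-- A word is Catalan when all partial sums of bar are nonnegative and the total is zero. -/
def IsCatalan (w : List Letter) : Prop :=
  (∀ i, i ≤ w.length → 0 ≤ esum w i) ∧ esum w w.length = 0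

/-- the coefficient C(w) = ∏_{i=0}^{2n} [1 + e_i]_q -/
def Ccoef (q : F) (w : List Letter) : F :=
  ∏ i ∈ Finset.range (w.length + 1), qint q (1 + esum w i)

/-- the n-th Catalan element C_n = ∑_{w ∈ Cat_n} C(w) w  -/
def catalanElt (q : F) (n : ℕ) : V F :=
  ∑ f : Fin (2 * n) → Letter,
    if IsCatalan (List.ofFn f) then Ccoef q (List.ofFn f) • wd (List.ofFn f) else 0

/-- the antiautomorphism ζ : reverse the word and swap x,y, extended linearly -/
def zeta (a : V F) : V F :=
  a.coeff.sum fun w c =>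
    MonoidAlgebra.single (FreeMonoid.ofList (((FreeMonoid.toList w).map sigma).reverse)) c

/-- The profile of a word: delete from the elevation sequence every interior e_i
    such that e_{i+1}-e_i and e_i-e_{i-1} have the same sign. -/
def profile (w : List Letter) : List ℤ :=
  (List.range (w.length + 1)).filterMap fun i =>
    if i = 0 ∨ i = w.length then some (esum w i)
    else if 0 < (esum w (i + 1) - esum w i) * (esum w i - esum w (i - 1)) then none
    else some (esum w i)

/-- The list (ℓ_0, h_1, ℓ_1, h_2, …, h_r, ℓ_r). -/
def P (r : ℕ) (ℓ h : ℕ → ℤ) : List ℤ :=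
  List.ofFn fun i : Fin (2 * r + 1) =>
    if i.val % 2 = 0 then ℓ (i.val / 2) else h ((i.val + 1) / 2)

/-- the word x^{h_1} y^{h_1-ℓ_1} x^{h_2-ℓ_1} y^{h_2-ℓ_2} ⋯ x^{h_r-ℓ_{r-1}} y^{h_r} -/
def explicitWord (r : ℕ) (ℓ h : ℕ → ℤ) : List Letter :=
  (List.range r).flatMap fun i =>
    List.replicate (h (i + 1) - ℓ i).toNat Letter.x ++
      List.replicate (h (i + 1) - ℓ (i + 1)).toNat Letter.y

/-- C(ℓ_0,h_1,…,h_r,ℓ_r), the ratio of q-factorials attached to a profile. -/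
def Cprof (q : F) (r : ℕ) (ℓ h : ℕ → ℤ) : F :=
  (∏ i ∈ Finset.Icc 1 r, qfac q (h i) * qfac q (h i + 1)) /
    (∏ i ∈ Finset.range (r + 1), qfac q (ℓ i) * qfac q (ℓ i + 1))

end

/-!
Peel off the first peak. A nonempty Catalan word is `x^(c+b) y^b w` with `b > 0` and `w` empty or
starting with `x`, i.e. the Catalan word `x^c w` with a hill `x^b y^b` inserted at height `c`.
Past the hill the elevations are those of `x^c w` shifted by `2b` positions, and in `x^c w` the
point at height `c` lies inside an ascent, so the insertion adds exactly the entries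
`h₁ = c + b, ℓ₁ = c` to the profile. On the coefficient side the factors `[1]⋯[c]` of the
elevations `0, …, c - 1` become `[1]⋯[c+b] · [c+b+1]⋯[c+2]`, a change by
`[c+b]! [c+b+1]! / ([c]! [c+1]!)`, which is what `h₁` and `ℓ₁` contribute to the profile formula.
Induction on the length finishes the proof; the empty word has profile `(0)` and coefficient `1`.
-/
section QNumbers

open Finset

variable {F : Type*} [Field F] {q : F}

lemma qint_one (hq : q - q⁻¹ ≠ 0) : qint q 1 = 1 := by
  rw [qint, zpow_one, zpow_neg_one, div_self hq]

lemma sub_inv_ne_zero (hq0 : q ≠ 0) (hq : ∀ k : ℕ, 0 < k → q ^ k ≠ 1) : q - q⁻¹ ≠ 0 := by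
  intro h
  refine hq 2 two_pos ?_
  rw [sq]
  nth_rewrite 2 [sub_eq_zero.mp h]
  exact mul_inv_cancel₀ hq0

lemma qint_ne_zero (hq0 : q ≠ 0) (hq : ∀ k : ℕ, 0 < k → q ^ k ≠ 1) {m : ℤ} (hm : 0 < m) :
    qint q m ≠ 0 := by
  refine div_ne_zero (fun h => hq (2 * m).toNat (by omega) ?_) (sub_inv_ne_zero hq0 hq)
  rw [← zpow_natCast, Int.toNat_of_nonneg (by omega), two_mul, zpow_add₀ hq0]
  nth_rewrite 2 [sub_eq_zero.mp h]
  rw [← zpow_add₀ hq0, add_neg_cancel, zpow_zero]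

@[simp]
lemma qfac_natCast (n : ℕ) : qfac q n = ∏ j ∈ range n, qint q (j + 1) := by
  simp [qfac]

lemma qfac_zero : qfac q 0 = 1 := by
  simp [qfac]

lemma qfac_one (hq : q - q⁻¹ ≠ 0) : qfac q 1 = 1 := by
  simp [qfac, qint_one hq]

lemma qfac_ne_zero (hq0 : q ≠ 0) (hq : ∀ k : ℕ, 0 < k → q ^ k ≠ 1) (m : ℤ) : qfac q m ≠ 0 :=
  prod_ne_zero_iff.mpr fun _ _ => qint_ne_zero hq0 hq (by positivity)

lemma qfac_succ_mul_prod (c b : ℕ) :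
    qfac q ((c : ℤ) + 1) * ∏ j ∈ range b, qint q (1 + ((c + b : ℕ) - j : ℤ)) =
      qfac q ((c + b : ℕ) + 1 : ℤ) := by
  rw [← Nat.cast_add_one, ← Nat.cast_add_one, qfac_natCast, qfac_natCast,
    show c + b + 1 = c + 1 + b by omega, prod_range_add _ (c + 1) b,
    ← prod_range_reflect (fun j => qint q ((c + 1 + j : ℕ) + 1)) b]
  refine congrArg _ (prod_congr rfl fun j hj => congrArg _ ?_)
  have := mem_range.mp hj
  push_cast
  omega

end QNumbers

lemma List.exists_eq_replicate_append {α : Type*} (z : α) :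
    ∀ l : List α, ∃ n t, l = replicate n z ++ t ∧ t.head? ≠ some z
  | [] => ⟨0, [], rfl, by simp⟩
  | a :: l => by
    by_cases ha : a = z
    · obtain ⟨n, t, rfl, ht⟩ := exists_eq_replicate_append z l
      exact ⟨n + 1, t, by simp [ha, replicate_succ], ht⟩
    · exact ⟨0, a :: l, rfl, by simpa using ha⟩

lemma List.filterMap_range'_eq_cons {α : Type*} {f : ℕ → Option α} {s k n : ℕ} {v : α}
    (hs : f s = some v) (hnone : ∀ i, s < i → i ≤ s + k → f i = none) :
    (range' s (k + 1 + n)).filterMap f = v :: (range' (s + k + 1) n).filterMap f := by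
  have hgap : (range' (s + 1) k).filterMap f = [] := by
    refine filterMap_eq_nil_iff.mpr fun i hi => ?_
    obtain ⟨j, hj, rfl⟩ := mem_range'.mp hi
    exact hnone _ (by omega) (by omega)
  rw [← range'_append, range'_succ, cons_append, filterMap_cons_some hs, filterMap_append, hgap]
  simp [add_assoc]

lemma Finset.prod_Icc_one_eq_prod_range {M : Type*} [CommMonoid M] (n : ℕ) (f : ℕ → M) :
    ∏ i ∈ Icc 1 n, f i = ∏ i ∈ range n, f (i + 1) := by
  induction n with
  | zero => rfl
  | succ n ih => rw [prod_Icc_succ_top (by omega), ih, prod_range_succ]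

open List

section Elevation

lemma esum_zero (w : List Letter) : esum w 0 = 0 := by
  simp [esum]

lemma esum_append_of_le {u : List Letter} (v : List Letter) {i : ℕ} (hi : i ≤ u.length) :
    esum (u ++ v) i = esum u i := by
  simp [esum, take_append_of_le_length hi]

lemma esum_append_length_add (u v : List Letter) (j : ℕ) :
    esum (u ++ v) (u.length + j) = esum u u.length + esum v j := by
  simp [esum, take_append, take_of_length_le]

lemma esum_replicate (z : Letter) (n i : ℕ) : esum (replicate n z) i = (min i n : ℕ) * bar z := by
  simp [esum, take_replicate]

lemma esum_one_of_head?_ne_y {w : List Letter} (hne : w ≠ []) (hw : w.head? ≠ some .y) :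
    esum w 1 = 1 := by
  obtain ⟨z, t, rfl⟩ := exists_cons_of_ne_nil hne
  cases z <;> simp_all [esum, bar]

variable (c b : ℕ) (w : List Letter)

lemma esum_replicate_x_append {i : ℕ} (hi : i ≤ c) : esum (replicate c .x ++ w) i = i := by
  rw [esum_append_of_le _ (by simpa using hi), esum_replicate]
  simp [bar, hi]

lemma esum_replicate_x_append_add (j : ℕ) :
    esum (replicate c .x ++ w) (c + j) = c + esum w j := by
  simpa [esum_replicate, bar] using esum_append_length_add (replicate c .x) w j

/-- `x^c w` with the hill `x^b y^b` inserted after its first `c` letters. -/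
def insertHill : List Letter := replicate (c + b) .x ++ replicate b .y ++ w

lemma length_insertHill : (insertHill c b w).length = c + b + b + w.length := by
  simp only [insertHill, length_append, length_replicate]

lemma esum_insertHill_ascent {i : ℕ} (hi : i ≤ c + b) : esum (insertHill c b w) i = i := by
  rw [insertHill, append_assoc, esum_replicate_x_append _ _ hi]

lemma esum_insertHill_descent {j : ℕ} (hj : j ≤ b) :
    esum (insertHill c b w) (c + b + j) = (c + b : ℕ) - j := by
  rw [insertHill, append_assoc, esum_replicate_x_append_add,
    esum_append_of_le _ (by simpa using hj), esum_replicate]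
  simp [bar, hj, sub_eq_add_neg]

lemma esum_insertHill_shift {k : ℕ} (hk : c ≤ k) :
    esum (insertHill c b w) (b + b + k) = esum (replicate c .x ++ w) k := by
  obtain ⟨j, rfl⟩ := Nat.exists_eq_add_of_le hk
  have hdescent := esum_append_length_add (replicate b .y) w j
  rw [length_replicate, esum_replicate] at hdescent
  rw [insertHill, append_assoc, show b + b + (c + j) = c + b + (b + j) by ring,
    esum_replicate_x_append_add, hdescent, esum_replicate_x_append_add]
  simp [bar]

end Elevation

section Catalan

variable {c b : ℕ} {w : List Letter}

lemma IsCatalan.exists_eq_insertHill (hw : IsCatalan w) (hne : w ≠ []) :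
    ∃ c b w', 0 < b ∧ w'.head? ≠ some .y ∧ (w' = [] → c = 0) ∧ w = insertHill c b w' := by
  obtain ⟨a, t, rfl, ht⟩ := exists_eq_replicate_append Letter.x w
  obtain ⟨b, w', rfl, hw'⟩ := exists_eq_replicate_append Letter.y t
  have hpeak : esum (replicate a .x ++ (replicate b .y ++ w')) (a + b) = (a : ℤ) - b := by
    rw [esum_replicate_x_append_add, esum_append_of_le _ (by simp), esum_replicate]
    simp [bar, sub_eq_add_neg]
  have hba : b ≤ a := by
    have := hw.1 (a + b) (by simp)
    omega
  have hb : 0 < b := by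
    by_contra! hb0
    obtain rfl : b = 0 := by omega
    obtain rfl : w' = [] := by
      cases w' with
      | nil => rfl
      | cons z _ => cases z <;> simp at ht hw'
    have := hw.2
    simp only [replicate_zero, append_nil, length_replicate, esum_replicate] at this hne
    simp [bar] at this
    exact hne (by simp [this])
  refine ⟨a - b, b, w', hb, hw', fun hnil => ?_,
    by rw [insertHill, Nat.sub_add_cancel hba, append_assoc]⟩
  have := hw.2
  simp only [hnil, append_nil, length_append, length_replicate] at this hpeak
  omega

lemma IsCatalan.of_insertHill (hw : IsCatalan (insertHill c b w)) :
    IsCatalan (replicate c .x ++ w) := by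
  refine ⟨fun i hi => ?_, ?_⟩
  · rcases le_or_gt i c with hic | hci
    · rw [esum_replicate_x_append _ _ hic]
      positivity
    · have := hw.1 (b + b + i) (by simp [length_insertHill] at hi ⊢; omega)
      rwa [esum_insertHill_shift _ _ _ hci.le] at this
  · have := hw.2
    rw [length_insertHill, show c + b + b + w.length = b + b + (c + w.length) by ring,
      esum_insertHill_shift _ _ _ (by omega)] at this
    simpa using this

end Catalan

section Profile

def profileAt (w : List Letter) (i : ℕ) : Option ℤ :=
  if i = 0 ∨ i = w.length then some (esum w i)
  else if 0 < (esum w (i + 1) - esum w i) * (esum w i - esum w (i - 1)) then none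
  else some (esum w i)

lemma profile_eq_filterMap_range' (w : List Letter) :
    profile w = (range' 0 (w.length + 1)).filterMap (profileAt w) := by
  rw [profile, range_eq_range']
  rfl

variable {c b : ℕ} {w : List Letter} {i : ℕ}

lemma profileAt_zero (w : List Letter) : profileAt w 0 = some 0 := by
  simp [profileAt, esum_zero]

lemma profileAt_length (w : List Letter) : profileAt w w.length = some (esum w w.length) := by
  simp [profileAt]

lemma profileAt_eq_none (h0 : i ≠ 0) (hlen : i ≠ w.length) {d : ℤ} (hd : d ≠ 0)
    (hnext : esum w (i + 1) - esum w i = d) (hprev : esum w i - esum w (i - 1) = d) :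
    profileAt w i = none := by
  rw [profileAt, if_neg (by tauto), hnext, hprev, if_pos (mul_self_pos.mpr hd)]

lemma profileAt_eq_some (hturn : esum w (i + 1) - esum w i = -(esum w i - esum w (i - 1))) :
    profileAt w i = some (esum w i) := by
  unfold profileAt
  split_ifs with hend hpos
  · rfl
  · rw [hturn, neg_mul, neg_pos] at hpos
    exact absurd hpos (mul_self_nonneg _).not_gt
  · rfl

lemma profile_replicate_x_append (hw : w.head? ≠ some .y) (hc : w = [] → c = 0) :
    profile (replicate c .x ++ w) =
      0 :: (range' (c + 1) w.length).filterMap (profileAt (replicate c .x ++ w)) := by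
  rw [profile_eq_filterMap_range', length_append, length_replicate,
    show c + w.length + 1 = c + 1 + w.length by ring,
    filterMap_range'_eq_cons (profileAt_zero _) ?_, zero_add]
  intro i hi0 hic
  rw [zero_add] at hic
  have hne : w ≠ [] := fun h => by have := hc h; omega
  have hm := length_pos_iff.mpr hne
  refine profileAt_eq_none (d := 1) (by omega) (by simp; omega) one_ne_zero ?_ ?_
  · rcases hic.lt_or_eq with hic | rfl
    · rw [esum_replicate_x_append _ _ hic, esum_replicate_x_append _ _ hic.le]
      push_cast
      ring
    · rw [esum_replicate_x_append_add, esum_one_of_head?_ne_y hne hw,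
        esum_replicate_x_append _ _ le_rfl]
      ring
  · rw [esum_replicate_x_append _ _ hic, esum_replicate_x_append _ _ (by omega)]
    omega

lemma profileAt_insertHill_ascent (hi0 : 0 < i) (hi : i < c + b) :
    profileAt (insertHill c b w) i = none := by
  refine profileAt_eq_none (d := 1) (by omega) (by simp [length_insertHill]; omega)
    one_ne_zero ?_ ?_
  · rw [esum_insertHill_ascent _ _ _ (by omega), esum_insertHill_ascent _ _ _ hi.le]
    push_cast
    ring
  · rw [esum_insertHill_ascent _ _ _ hi.le, esum_insertHill_ascent _ _ _ (by omega)]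
    omega

lemma profileAt_insertHill_peak (hb : 0 < b) :
    profileAt (insertHill c b w) (c + b) = some ((c + b : ℕ) : ℤ) := by
  rw [profileAt_eq_some, esum_insertHill_ascent _ _ _ le_rfl]
  rw [esum_insertHill_descent _ _ _ (j := 1) hb, esum_insertHill_ascent _ _ _ le_rfl,
    esum_insertHill_ascent _ _ _ (by omega)]
  omega

lemma profileAt_insertHill_descent {j : ℕ} (hj0 : 0 < j) (hj : j < b) :
    profileAt (insertHill c b w) (c + b + j) = none := by
  refine profileAt_eq_none (d := -1) (by omega) (by simp [length_insertHill]; omega)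
    (by norm_num) ?_ ?_
  · rw [add_assoc, esum_insertHill_descent _ _ _ hj, esum_insertHill_descent _ _ _ hj.le]
    push_cast
    ring
  · rw [show c + b + j - 1 = c + b + (j - 1) by omega, esum_insertHill_descent _ _ _ hj.le,
      esum_insertHill_descent _ _ _ (by omega)]
    omega

lemma profileAt_insertHill_valley (hb : 0 < b) (hw : w.head? ≠ some .y) :
    profileAt (insertHill c b w) (c + b + b) = some (c : ℤ) := by
  have hbottom : esum (insertHill c b w) (c + b + b) = c := by
    rw [esum_insertHill_descent _ _ _ le_rfl]
    omega
  by_cases hne : w = []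
  · have hend : c + b + b = (insertHill c b w).length := by simp [length_insertHill, hne]
    rw [hend, profileAt_length, ← hend, hbottom]
  · have hafter : esum (insertHill c b w) (c + b + b + 1) = c + 1 := by
      rw [show c + b + b + 1 = b + b + (c + 1) by ring, esum_insertHill_shift _ _ _ (by omega),
        esum_replicate_x_append_add, esum_one_of_head?_ne_y hne hw]
    rw [profileAt_eq_some, hbottom]
    rw [hafter, hbottom, show c + b + b - 1 = c + b + (b - 1) by omega,
      esum_insertHill_descent _ _ _ (by omega)]
    omega

lemma filterMap_profileAt_insertHill :
    (range' (c + b + b + 1) w.length).filterMap (profileAt (insertHill c b w)) =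
      (range' (c + 1) w.length).filterMap (profileAt (replicate c .x ++ w)) := by
  rw [show c + b + b + 1 = b + b + (c + 1) by ring, ← map_add_range', filterMap_map]
  refine filterMap_congr fun i hi => ?_
  obtain ⟨j, -, rfl⟩ := mem_range'.mp hi
  simp only [Function.comp, profileAt, length_insertHill, length_append, length_replicate,
    show b + b + (c + 1 + 1 * j) + 1 = b + b + (c + 1 + 1 * j + 1) by ring,
    show b + b + (c + 1 + 1 * j) - 1 = b + b + (c + 1 + 1 * j - 1) by omega,
    esum_insertHill_shift c b w (show c ≤ c + 1 + 1 * j by omega),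
    esum_insertHill_shift c b w (show c ≤ c + 1 + 1 * j + 1 by omega),
    esum_insertHill_shift c b w (show c ≤ c + 1 + 1 * j - 1 by omega)]
  congr 1
  apply propext
  omega

lemma profile_insertHill (hb : 0 < b) (hw : w.head? ≠ some .y) (hc : w = [] → c = 0) :
    profile (insertHill c b w) =
      0 :: ((c + b : ℕ) : ℤ) :: (c : ℤ) :: (profile (replicate c .x ++ w)).tail := by
  rw [profile_replicate_x_append hw hc, tail_cons, profile_eq_filterMap_range',
    length_insertHill,
    show c + b + b + w.length + 1 = (c + b - 1) + 1 + ((b - 1) + 1 + (0 + 1 + w.length)) by omega,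
    filterMap_range'_eq_cons (profileAt_zero _)
      fun i hi hi' => profileAt_insertHill_ascent hi (by omega),
    show 0 + (c + b - 1) + 1 = c + b by omega,
    filterMap_range'_eq_cons (profileAt_insertHill_peak hb) fun i hi hi' => by
      obtain ⟨j, rfl⟩ := Nat.exists_eq_add_of_lt hi
      exact profileAt_insertHill_descent (j := j + 1) (by omega) (by omega),
    show c + b + (b - 1) + 1 = c + b + b by omega,
    filterMap_range'_eq_cons (profileAt_insertHill_valley hb hw) (by omega), add_zero,
    filterMap_profileAt_insertHill]

end Profile

section Coefficient

lemma prod_range_esum_append {M : Type*} [CommMonoid M] (g : ℤ → M) (u v : List Letter) :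
    ∏ i ∈ Finset.range ((u ++ v).length + 1), g (esum (u ++ v) i) =
      (∏ i ∈ Finset.range u.length, g (esum u i)) *
        ∏ j ∈ Finset.range (v.length + 1), g (esum u u.length + esum v j) := by
  rw [length_append, add_assoc, Finset.prod_range_add]
  congr 1
  · exact Finset.prod_congr rfl fun i hi =>
      by rw [esum_append_of_le _ (Finset.mem_range.mp hi).le]
  · exact Finset.prod_congr rfl fun j _ => by rw [esum_append_length_add]

variable {F : Type*} [Field F] (q : F) (c b : ℕ) (w : List Letter)

lemma Ccoef_replicate_x_append :
    Ccoef q (replicate c .x ++ w) =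
      qfac q c * ∏ j ∈ Finset.range (w.length + 1), qint q (1 + (c + esum w j)) := by
  rw [Ccoef, prod_range_esum_append (fun e => qint q (1 + e)), length_replicate, qfac_natCast]
  congr 1
  · refine Finset.prod_congr rfl fun i hi => ?_
    rw [esum_replicate]
    simp [bar, (Finset.mem_range.mp hi).le, add_comm]
  · simp [esum_replicate, bar]

lemma Ccoef_insertHill_mul :
    Ccoef q (insertHill c b w) * (qfac q c * qfac q (c + 1)) =
      qfac q (c + b : ℕ) * qfac q ((c + b : ℕ) + 1 : ℤ) * Ccoef q (replicate c .x ++ w) := by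
  have hdescent :
      ∏ j ∈ Finset.range ((replicate b Letter.y ++ w).length + 1),
          qint q (1 + ((c + b : ℕ) + esum (replicate b .y ++ w) j)) =
        (∏ j ∈ Finset.range b, qint q (1 + ((c + b : ℕ) - j : ℤ))) *
          ∏ j ∈ Finset.range (w.length + 1), qint q (1 + (c + esum w j)) := by
    rw [prod_range_esum_append (fun e => qint q (1 + ((c + b : ℕ) + e))), length_replicate]
    congr 1
    · refine Finset.prod_congr rfl fun j hj => ?_
      simp [esum_replicate, bar, (Finset.mem_range.mp hj).le, sub_eq_add_neg]
    · refine Finset.prod_congr rfl fun j _ => ?_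
      simp only [esum_replicate, min_self, bar]
      push_cast
      ring_nf
  rw [insertHill, append_assoc, Ccoef_replicate_x_append, hdescent, Ccoef_replicate_x_append,
    ← qfac_succ_mul_prod c b]
  ring

end Coefficient

section ProfileFormula

lemma P_zero (ℓ h : ℕ → ℤ) : P 0 ℓ h = [ℓ 0] := by
  simp [P]

lemma P_succ (r : ℕ) (ℓ h : ℕ → ℤ) :
    P (r + 1) ℓ h = ℓ 0 :: h 1 :: P r (fun i => ℓ (i + 1)) (fun i => h (i + 1)) := by
  refine ext_getElem (by simp [P]) fun i _ _ => ?_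
  rcases i with _ | _ | i
  · simp [P]
  · simp [P]
  · simp only [P, List.getElem_ofFn, getElem_cons_succ]
    rw [show (i + 1 + 1) % 2 = i % 2 by omega, show (i + 1 + 1) / 2 = i / 2 + 1 by omega,
      show (i + 1 + 1 + 1) / 2 = (i + 1) / 2 + 1 by omega]

lemma P_eq_cons_tail {r : ℕ} {ℓ ℓ' : ℕ → ℤ} (h : ℕ → ℤ) (hℓ : ∀ i, ℓ (i + 1) = ℓ' (i + 1)) :
    P r ℓ h = ℓ 0 :: (P r ℓ' h).tail := by
  cases r with
  | zero => simp [P_zero]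
  | succ r => simp [P_succ, hℓ]

lemma Cprof_succ {F : Type*} [Field F] (q : F) (r : ℕ) {ℓ ℓ' : ℕ → ℤ} (h : ℕ → ℤ)
    (hℓ0 : ℓ' 0 = ℓ 0) (hℓ : ∀ i, ℓ' (i + 1) = ℓ (i + 2)) :
    Cprof q (r + 1) ℓ h =
      qfac q (h 1) * qfac q (h 1 + 1) / (qfac q (ℓ 1) * qfac q (ℓ 1 + 1)) *
        Cprof q r ℓ' (fun i => h (i + 1)) := by
  simp only [Cprof, Finset.prod_Icc_one_eq_prod_range, Finset.prod_range_succ' _ (r + 1),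
    Finset.prod_range_succ' _ r, hℓ0, hℓ]
  ring

end ProfileFormula

section Main

variable {F : Type*} [Field F] {q : F} {r : ℕ} {ℓ h : ℕ → ℤ}

lemma Ccoef_nil_eq_Cprof (hq : q - q⁻¹ ≠ 0) (hp : profile [] = P r ℓ h) :
    Ccoef q [] = Cprof q r ℓ h := by
  obtain rfl : r = 0 := by
    have := congrArg length hp
    simp [profile, P] at this
    omega
  rw [P_zero, show profile [] = [0] from rfl, cons.injEq] at hp
  simp [Ccoef, Cprof, esum_zero, ← hp.1, qfac_zero, qfac_one hq, qint_one hq]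

lemma Ccoef_insertHill_eq_Cprof (hq0 : q ≠ 0) (hq : ∀ k : ℕ, 0 < k → q ^ k ≠ 1) {c b : ℕ}
    {w : List Letter} (hb : 0 < b) (hw : w.head? ≠ some .y) (hc : w = [] → c = 0)
    (ih : ∀ r ℓ h, profile (replicate c .x ++ w) = P r ℓ h →
      Ccoef q (replicate c .x ++ w) = Cprof q r ℓ h)
    (hp : profile (insertHill c b w) = P r ℓ h) :
    Ccoef q (insertHill c b w) = Cprof q r ℓ h := by
  rw [profile_insertHill hb hw hc] at hp
  obtain _ | r := r
  · simp [P_zero] at hp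
  rw [P_succ, cons.injEq, cons.injEq,
    P_eq_cons_tail (ℓ' := fun i => ℓ (i + 1)) _ fun _ => rfl, cons.injEq] at hp
  obtain ⟨hℓ0, hh1, hℓ1, hrest⟩ := hp
  set ℓ' : ℕ → ℤ := fun i => if i = 0 then ℓ 0 else ℓ (i + 1)
  have hpV : profile (replicate c .x ++ w) = P r ℓ' fun i => h (i + 1) := by
    rw [P_eq_cons_tail (ℓ' := fun i => ℓ (i + 1)) _ fun i => rfl, ← hrest,
      profile_replicate_x_append hw hc]
    simp [ℓ', ← hℓ0]
  have hA : qfac q c * qfac q (c + 1) ≠ 0 :=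
    mul_ne_zero (qfac_ne_zero hq0 hq _) (qfac_ne_zero hq0 hq _)
  rw [Cprof_succ q r h (ℓ' := ℓ') (by simp [ℓ']) (fun i => by simp [ℓ']), ← ih _ _ _ hpV, ← hh1,
    ← hℓ1, div_mul_eq_mul_div, eq_div_iff hA]
  exact Ccoef_insertHill_mul q c b w

end Main

theorem stmt14 {F : Type*} [Field F] (q : F) (hq0 : q ≠ 0)
    (hq : ∀ k : ℕ, 0 < k → q ^ k ≠ 1) (w : List Letter) (hw : IsCatalan w)
    (r : ℕ) (ℓ h : ℕ → ℤ) (hp : profile w = P r ℓ h) :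
    Ccoef q w = Cprof q r ℓ h := by
  induction hn : w.length using Nat.strong_induction_on generalizing w r ℓ h with
  | _ n ih =>
  rcases eq_or_ne w [] with rfl | hne
  · exact Ccoef_nil_eq_Cprof (sub_inv_ne_zero hq0 hq) hp
  obtain ⟨c, b, w', hb, hw', hc, rfl⟩ := hw.exists_eq_insertHill hne
  refine Ccoef_insertHill_eq_Cprof hq0 hq hb hw' hc (fun r ℓ h hpV => ?_) hp
  exact ih _ (by simp [length_insertHill] at hn ⊢; omega) _ hw.of_insertHill r ℓ h hpV rfl
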